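/- arXiv:2505.16414 — 3 statements merged into one kernel-verified Lean document; each statement's English description precedes it below -/
import Mathlib

section
/- Let ε > 0, L > 0 and λ, ν ∈ ℝ, and define φ : ℝ² → ℝ by φ(x) = -2·log(1 + π·‖x‖²/ε²) + λ·x₁ + ν·x₂. Then ∫_{B_{Lε}(0)} ‖∇φ(x)‖² dx = 16π·log(1 + π·L²) - 16π²·L²/(1 + π·L²) + π·(λ² + ν²)·(Lε)². -/
open MeasureTheory
open scoped Real

/-- The Euclidean plane. -/
abbrev E2 : Type := EuclideanSpace ℝ (Fin 2)

lemma grad_lemma (ε lam ν : ℝ) (hε : 0 < ε) (x : E2) :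
    HasGradientAt (fun x : E2 => -2 * Real.log (1 + π * ‖x‖ ^ 2 / ε ^ 2) + lam * x 0 + ν * x 1)
      ((-4 * π / (ε ^ 2 + π * ‖x‖ ^ 2)) • x
        + (lam • EuclideanSpace.single 0 (1:ℝ) + ν • EuclideanSpace.single 1 (1:ℝ))) x := by
  have hpos : (0:ℝ) < 1 + π * ‖x‖ ^ 2 / ε ^ 2 := by positivity
  have hn : HasFDerivAt (fun x : E2 => ‖x‖ ^ 2) (2 • (innerSL ℝ x)) x := by
    simpa using (hasFDerivAt_id x).norm_sq
  have hu : HasFDerivAt (fun x : E2 => 1 + π * ‖x‖ ^ 2 / ε ^ 2)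
      ((ε ^ 2)⁻¹ • π • 2 • (innerSL ℝ x)) x := by
    simp only [div_eq_mul_inv]
    exact ((hn.const_mul π).mul_const _).const_add 1
  have hlog := (hu.log hpos.ne').const_mul (-2 : ℝ)
  have h0 : HasFDerivAt (fun x : E2 => lam * x 0) (lam • (EuclideanSpace.proj (0 : Fin 2) : E2 →L[ℝ] ℝ)) x :=
    ((EuclideanSpace.proj (0 : Fin 2) : E2 →L[ℝ] ℝ).hasFDerivAt.const_mul lam)
  have h1 : HasFDerivAt (fun x : E2 => ν * x 1) (ν • (EuclideanSpace.proj (1 : Fin 2) : E2 →L[ℝ] ℝ)) x :=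
    ((EuclideanSpace.proj (1 : Fin 2) : E2 →L[ℝ] ℝ).hasFDerivAt.const_mul ν)
  have hd := (hlog.add h0).add h1
  rw [hasGradientAt_iff_hasFDerivAt]
  refine hd.congr_fderiv ?_
  ext y
  simp [InnerProductSpace.toDual, inner_add_left, inner_smul_left, real_inner_smul_left,
    EuclideanSpace.inner_single_left, real_inner_comm x y]
  have hε2 : (ε:ℝ)^2 ≠ 0 := by positivity
  field_simp
  ring

lemma normsq_lemma (ε lam ν : ℝ) (x : E2) :
    ‖(-4 * π / (ε ^ 2 + π * ‖x‖ ^ 2)) • x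
        + (lam • EuclideanSpace.single 0 (1:ℝ) + ν • EuclideanSpace.single 1 (1:ℝ))‖ ^ 2
      = (4 * π / (ε ^ 2 + π * ‖x‖ ^ 2)) ^ 2 * ‖x‖ ^ 2 + (lam ^ 2 + ν ^ 2)
        + 2 * (-4 * π / (ε ^ 2 + π * ‖x‖ ^ 2)) * (lam * x 0 + ν * x 1) := by
  set c : ℝ := -4 * π / (ε ^ 2 + π * ‖x‖ ^ 2) with hc
  have hexp : ∀ a b : E2, ‖a + b‖ ^ 2 = ‖a‖ ^ 2 + 2 * (inner ℝ a b : ℝ) + ‖b‖ ^ 2 := by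
    intro a b; rw [← real_inner_self_eq_norm_sq, ← real_inner_self_eq_norm_sq,
      ← real_inner_self_eq_norm_sq, inner_add_add_self, real_inner_comm b a]; ring
  rw [hexp, hexp]
  have h00 : (inner ℝ (EuclideanSpace.single 0 (1:ℝ) : E2) (EuclideanSpace.single 0 (1:ℝ) : E2) : ℝ) = 1 := by
    simp [EuclideanSpace.inner_single_left, EuclideanSpace.single_apply]
  have h11 : (inner ℝ (EuclideanSpace.single 1 (1:ℝ) : E2) (EuclideanSpace.single 1 (1:ℝ) : E2) : ℝ) = 1 := by
    simp [EuclideanSpace.inner_single_left, EuclideanSpace.single_apply]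
  have h01 : (inner ℝ (EuclideanSpace.single 0 (1:ℝ) : E2) (EuclideanSpace.single 1 (1:ℝ) : E2) : ℝ) = 0 := by
    simp [EuclideanSpace.inner_single_left, EuclideanSpace.single_apply]
  have hx0 : (inner ℝ x (EuclideanSpace.single 0 (1:ℝ) : E2) : ℝ) = x 0 := by
    rw [real_inner_comm]; simp [EuclideanSpace.inner_single_left]
  have hx1 : (inner ℝ x (EuclideanSpace.single 1 (1:ℝ) : E2) : ℝ) = x 1 := by
    rw [real_inner_comm]; simp [EuclideanSpace.inner_single_left]
  simp only [inner_add_right, inner_add_left, real_inner_smul_left, real_inner_smul_right,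
    norm_smul, EuclideanSpace.norm_single, h00, h11, h01, hx0, hx1, real_inner_comm
      (EuclideanSpace.single 1 (1:ℝ) : E2) (EuclideanSpace.single 0 (1:ℝ) : E2),
    norm_one, mul_one, mul_pow, sq_abs, Real.norm_eq_abs]
  have : (c ^ 2) = (4 * π / (ε ^ 2 + π * ‖x‖ ^ 2)) ^ 2 := by rw [hc]; ring
  rw [← this]; ring

lemma vol_ball_E2 (r : ℝ) (hr : 0 ≤ r) :
    (volume (Metric.ball (0 : E2) r)).toReal = π * r ^ 2 := by
  rw [EuclideanSpace.volume_ball]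
  have h1 : (Fintype.card (Fin 2)) = 2 := by simp
  rw [h1]
  have h2 : Real.sqrt π ^ 2 / Real.Gamma ((2:ℕ) / 2 + 1) = π := by
    rw [Real.sq_sqrt Real.pi_pos.le,
      show ((2:ℕ):ℝ)/2 + 1 = 2 by norm_num, Real.Gamma_two, div_one]
  rw [h2, ← ENNReal.ofReal_pow hr, ← ENNReal.ofReal_mul (by positivity),
    ENNReal.toReal_ofReal (by positivity)]
  try ring

lemma antideriv_lemma (ε : ℝ) (hε : 0 < ε) (t : ℝ) :
    HasDerivAt (fun r : ℝ => 8 * (Real.log (ε ^ 2 + π * r ^ 2) + ε ^ 2 / (ε ^ 2 + π * r ^ 2)))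
      (t * ((4 * π / (ε ^ 2 + π * t ^ 2)) ^ 2 * t ^ 2)) t := by
  have hden : (0:ℝ) < ε ^ 2 + π * t ^ 2 := by positivity
  have h1 : HasDerivAt (fun r : ℝ => ε ^ 2 + π * r ^ 2) (2 * π * t) t := by
    have := ((hasDerivAt_pow 2 t).const_mul π).const_add (ε ^ 2)
    refine this.congr_deriv ?_; push_cast; ring
  have h2 := h1.log hden.ne'
  have h3 := (hasDerivAt_const t (ε ^ 2)).div h1 hden.ne'
  have h4 := (h2.add h3).const_mul 8
  refine h4.congr_deriv ?_
  field_simp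
  ring

lemma oneD (ε L : ℝ) (hε : 0 < ε) (hL : 0 < L) :
    ∫ y in (0:ℝ)..(L*ε), y * ((4 * π / (ε ^ 2 + π * y ^ 2)) ^ 2 * y ^ 2)
      = 8 * Real.log (1 + π * L ^ 2) - 8 * π * L ^ 2 / (1 + π * L ^ 2) := by
  have hcont : Continuous (fun y : ℝ => y * ((4 * π / (ε ^ 2 + π * y ^ 2)) ^ 2 * y ^ 2)) := by
    refine continuous_id.mul (Continuous.mul (Continuous.pow ?_ 2) (by continuity))
    exact continuous_const.div (by continuity) (fun y => by positivity)
  rw [intervalIntegral.integral_eq_sub_of_hasDerivAt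
    (fun t _ => antideriv_lemma ε hε t) (hcont.intervalIntegrable _ _)]
  rw [show ε ^ 2 + π * (L * ε) ^ 2 = ε ^ 2 * (1 + π * L ^ 2) from by ring,
    show ε ^ 2 + π * (0:ℝ) ^ 2 = ε ^ 2 from by ring,
    Real.log_mul (by positivity) (by positivity)]
  have hd : (0:ℝ) < 1 + π * L ^ 2 := by positivity
  have hε2 : (0:ℝ) < ε ^ 2 := by positivity
  field_simp
  ring

/-- exact Dirichlet energy of the test function
`φ(x) = -2 log(1 + π ‖x‖²/ε²) + λ x₁ + ν x₂` on the ball of radius `L ε`. -/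
theorem test_function_dirichlet_energy (ε L lam ν : ℝ) (hε : 0 < ε) (hL : 0 < L)
    (φ : E2 → ℝ)
    (hφ : ∀ x : E2,
      φ x = -2 * Real.log (1 + π * ‖x‖ ^ 2 / ε ^ 2) + lam * x 0 + ν * x 1) :
    (∫ x in Metric.ball (0 : E2) (L * ε), ‖gradient φ x‖ ^ 2) =
      16 * π * Real.log (1 + π * L ^ 2) - 16 * π ^ 2 * L ^ 2 / (1 + π * L ^ 2) +
        π * (lam ^ 2 + ν ^ 2) * (L * ε) ^ 2 := by
  have hφeq : φ = fun x : E2 =>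
      -2 * Real.log (1 + π * ‖x‖ ^ 2 / ε ^ 2) + lam * x 0 + ν * x 1 := funext hφ
  subst hφeq
  have hR : 0 < L * ε := mul_pos hL hε
  set R := L * ε with hRdef
  set c : E2 → ℝ := fun x => -4 * π / (ε ^ 2 + π * ‖x‖ ^ 2) with hcdef
  have hgrad : ∀ x : E2, gradient (fun x : E2 =>
      -2 * Real.log (1 + π * ‖x‖ ^ 2 / ε ^ 2) + lam * x 0 + ν * x 1) x
      = c x • x + (lam • EuclideanSpace.single 0 (1:ℝ) + ν • EuclideanSpace.single 1 (1:ℝ)) :=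
    fun x => (grad_lemma ε lam ν hε x).gradient
  have hnorm : ∀ x : E2, ‖gradient (fun x : E2 =>
      -2 * Real.log (1 + π * ‖x‖ ^ 2 / ε ^ 2) + lam * x 0 + ν * x 1) x‖ ^ 2
      = ((4 * π / (ε ^ 2 + π * ‖x‖ ^ 2)) ^ 2 * ‖x‖ ^ 2 + (lam ^ 2 + ν ^ 2))
        + 2 * (c x) * (lam * x 0 + ν * x 1) := by
    intro x; rw [hgrad x, normsq_lemma]; try ring
  rw [setIntegral_congr_fun measurableSet_ball (fun x _ => hnorm x)]
  -- continuity
  have hdenc : Continuous (fun x : E2 => ε ^ 2 + π * ‖x‖ ^ 2) :=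
    continuous_const.add (continuous_const.mul (continuous_norm.pow 2))
  have hdenne : ∀ x : E2, (ε ^ 2 + π * ‖x‖ ^ 2) ≠ 0 := fun x => by positivity
  have hc_cont : Continuous c := continuous_const.div hdenc hdenne
  have hproj0 : Continuous (fun x : E2 => x 0) :=
    (EuclideanSpace.proj (0 : Fin 2) : E2 →L[ℝ] ℝ).continuous
  have hproj1 : Continuous (fun x : E2 => x 1) :=
    (EuclideanSpace.proj (1 : Fin 2) : E2 →L[ℝ] ℝ).continuous
  have hradc : Continuous (fun x : E2 => (4 * π / (ε ^ 2 + π * ‖x‖ ^ 2)) ^ 2 * ‖x‖ ^ 2) :=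
    ((continuous_const.div hdenc hdenne).pow 2).mul (continuous_norm.pow 2)
  have h1cont : Continuous (fun x : E2 =>
      (4 * π / (ε ^ 2 + π * ‖x‖ ^ 2)) ^ 2 * ‖x‖ ^ 2 + (lam ^ 2 + ν ^ 2)) :=
    hradc.add continuous_const
  have h2cont : Continuous (fun x : E2 => 2 * (c x) * (lam * x 0 + ν * x 1)) :=
    ((continuous_const.mul hc_cont).mul
      ((continuous_const.mul hproj0).add (continuous_const.mul hproj1)))
  have hint : ∀ {f : E2 → ℝ}, Continuous f → IntegrableOn f (Metric.ball 0 R) := fun hf =>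
    (hf.locallyIntegrable.integrableOn_isCompact (isCompact_closedBall 0 R)).mono_set
      Metric.ball_subset_closedBall
  rw [integral_add (hint h1cont) (hint h2cont),
    integral_add (hint hradc) (integrableOn_const measure_ball_lt_top.ne)]
  -- cross term vanishes
  have hodd : ∫ x in Metric.ball (0:E2) R, 2 * (c x) * (lam * x 0 + ν * x 1) = 0 := by
    have key := (Measure.measurePreserving_neg (volume : Measure E2)).setIntegral_preimage_emb
      (Homeomorph.neg E2).measurableEmbedding
      (fun x : E2 => 2 * (c x) * (lam * x 0 + ν * x 1)) (Metric.ball 0 R)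
    have hpre : (Neg.neg : E2 → E2) ⁻¹' (Metric.ball 0 R) = Metric.ball 0 R := by
      ext z; simp [mem_ball_zero_iff]
    have hGneg : ∀ x : E2, 2 * (c (-x)) * (lam * ((-x) 0) + ν * ((-x) 1))
        = -(2 * (c x) * (lam * x 0 + ν * x 1)) := by
      intro x
      have hn : ‖(-x : E2)‖ = ‖x‖ := norm_neg x
      have h0 : ((-x : E2)) 0 = -(x 0) := rfl
      have h1 : ((-x : E2)) 1 = -(x 1) := rfl
      simp only [hcdef, hn, h0, h1]; ring
    rw [hpre] at key
    simp_rw [hGneg] at key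
    rw [integral_neg] at key
    linarith
  rw [hodd, add_zero]
  -- constant part
  have hconst : ∫ _x in Metric.ball (0:E2) R, (lam ^ 2 + ν ^ 2 : ℝ)
      = (lam ^ 2 + ν ^ 2) * (π * R ^ 2) := by
    rw [setIntegral_const, measureReal_def, vol_ball_E2 R hR.le, smul_eq_mul]; ring
  rw [hconst]
  -- radial part
  have hrad : ∫ x in Metric.ball (0:E2) R, (4 * π / (ε ^ 2 + π * ‖x‖ ^ 2)) ^ 2 * ‖x‖ ^ 2
      = 16 * π * Real.log (1 + π * L ^ 2) - 16 * π ^ 2 * L ^ 2 / (1 + π * L ^ 2) := by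
    set g : ℝ → ℝ := fun r => (4 * π / (ε ^ 2 + π * r ^ 2)) ^ 2 * r ^ 2 with hg
    have step1 : ∫ x in Metric.ball (0:E2) R, (4 * π / (ε ^ 2 + π * ‖x‖ ^ 2)) ^ 2 * ‖x‖ ^ 2
        = ∫ x : E2, Set.indicator (Set.Iio R) g ‖x‖ := by
      rw [← integral_indicator measurableSet_ball]
      congr 1; ext x
      by_cases hx : ‖x‖ < R
      · rw [Set.indicator_of_mem (mem_ball_zero_iff.2 hx),
          Set.indicator_of_mem (show ‖x‖ ∈ Set.Iio R from hx)]
      · rw [Set.indicator_of_notMem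
            (show x ∉ Metric.ball (0:E2) R from fun h => hx (mem_ball_zero_iff.1 h)),
          Set.indicator_of_notMem (show ‖x‖ ∉ Set.Iio R from hx)]
    rw [step1, integral_fun_norm_addHaar (volume : Measure E2) (Set.indicator (Set.Iio R) g)]
    have hdim : Module.finrank ℝ E2 = 2 := finrank_euclideanSpace_fin
    rw [hdim, measureReal_def, vol_ball_E2 1 zero_le_one]
    have hind : ∀ y : ℝ, y ^ (2 - 1 : ℕ) • Set.indicator (Set.Iio R) g y
        = Set.indicator (Set.Iio R) (fun y => y * g y) y := by
      intro y
      by_cases hy : y ∈ Set.Iio R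
      · rw [Set.indicator_of_mem hy, Set.indicator_of_mem hy]; simp
      · rw [Set.indicator_of_notMem hy, Set.indicator_of_notMem hy, smul_zero]
    simp_rw [hind]
    rw [integral_indicator measurableSet_Iio, Measure.restrict_restrict measurableSet_Iio,
      show Set.Iio R ∩ Set.Ioi 0 = Set.Ioo 0 R from by ext y; simp [and_comm],
      ← integral_Ioc_eq_integral_Ioo, ← intervalIntegral.integral_of_le hR.le, hg]
    rw [oneD ε L hε hL]
    simp only [smul_eq_mul, nsmul_eq_mul, one_pow, mul_one, Nat.cast_ofNat]
    ring
  rw [hrad]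
  ring
end

section
/- Let 0 < s < δ and a, b ∈ ℝ. Suppose Ψ is continuous on the closed annulus {x ∈ ℝ² : s ≤ ‖x‖ ≤ δ}, continuously differentiable on the open annulus {s < ‖x‖ < δ}, with Ψ(x) = a for all x with ‖x‖ = s and Ψ(x) = b for all x with ‖x‖ = δ. Then ∫_{s < ‖x‖ < δ} ‖∇Ψ(x)‖² dx ≥ 4π·(a - b)²/(log δ² - log s²). -/
open MeasureTheory
open scoped Real ENNReal

open Set Real

/-- The standard identification of `ℝ × ℝ` with the Euclidean plane. -/
noncomputable def mm : ℝ × ℝ → E2 :=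
  fun p => Complex.orthonormalBasisOneI.repr (p.1 + p.2 * Complex.I)

lemma mm_norm (p : ℝ × ℝ) : ‖mm p‖ = Real.sqrt (p.1 ^ 2 + p.2 ^ 2) := by
  rw [mm, LinearIsometryEquiv.norm_map, Complex.norm_def,
    Complex.normSq_add_mul_I]

lemma mm_smul (r x y : ℝ) : mm (r * x, r * y) = r • mm (x, y) := by
  simp only [mm]
  rw [← LinearIsometryEquiv.map_smul]
  congr 1
  push_cast [Complex.real_smul]
  ring

noncomputable def mmE : ℝ × ℝ ≃ᵐ E2 :=
  Complex.measurableEquivRealProd.symm.trans Complex.orthonormalBasisOneI.measurableEquiv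

lemma mmE_coe : (mmE : ℝ × ℝ → E2) = mm := by
  funext p
  have h1 : Complex.measurableEquivRealProd.symm p = (p.1 + p.2 * Complex.I : ℂ) := by
    simp [Complex.measurableEquivRealProd, Complex.equivRealProdCLM_symm_apply]
  show Complex.orthonormalBasisOneI.measurableEquiv (Complex.measurableEquivRealProd.symm p) = _
  rw [h1]
  rfl

lemma mm_measurePreserving : MeasurePreserving mm volume volume := by
  rw [← mmE_coe]
  exact Complex.orthonormalBasisOneI.measurePreserving_measurableEquiv.comp
    Complex.volume_preserving_equiv_real_prod.symm

lemma mm_embedding : MeasurableEmbedding mm := by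
  rw [← mmE_coe]; exact mmE.measurableEmbedding

lemma mm_continuous : Continuous mm :=
  (Complex.orthonormalBasisOneI.repr.continuous.comp
    (by continuity : Continuous fun p : ℝ × ℝ => (p.1 : ℂ) + p.2 * Complex.I))

lemma norm_mm_polar (r θ : ℝ) (hr : 0 ≤ r) : ‖mm (polarCoord.symm (r, θ))‖ = r := by
  rw [polarCoord_symm_apply, mm_norm]
  have h : (r * Real.cos θ) ^ 2 + (r * Real.sin θ) ^ 2 = r ^ 2 := by
    rw [mul_pow, mul_pow, ← mul_add, Real.cos_sq_add_sin_sq, mul_one]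
  rw [h, Real.sqrt_sq hr]

section
variable {s δ : ℝ}

lemma annulus_open : IsOpen {x : E2 | s < ‖x‖ ∧ ‖x‖ < δ} :=
  (isOpen_lt continuous_const continuous_norm).inter (isOpen_lt continuous_norm continuous_const)

lemma lintegral_annulus (hs : 0 < s) (g : E2 → ℝ≥0∞) :
    ∫⁻ x in {x : E2 | s < ‖x‖ ∧ ‖x‖ < δ}, g x
      = ∫⁻ p in Ioo s δ ×ˢ Ioo (-π) π, ENNReal.ofReal p.1 * g (mm (polarCoord.symm p)) := by
  set T : Set (ℝ × ℝ) := Ioo s δ ×ˢ Ioo (-π) π with hTdef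
  have hT : T ⊆ polarCoord.target := by
    rw [polarCoord_target]
    exact prod_mono (fun x hx => lt_trans hs hx.1) le_rfl
  set A' : Set (ℝ × ℝ) := {p | s < Real.sqrt (p.1 ^ 2 + p.2 ^ 2)
      ∧ Real.sqrt (p.1 ^ 2 + p.2 ^ 2) < δ} with hA'def
  have hpre : mm ⁻¹' {x : E2 | s < ‖x‖ ∧ ‖x‖ < δ} = A' := by
    ext p; simp [mm_norm, A']
  have himg : polarCoord.symm '' T = polarCoord.source ∩ A' := by
    rw [polarCoord.symm_image_eq_source_inter_preimage hT]
    ext p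
    simp only [mem_inter_iff, mem_preimage, and_congr_right_iff]
    intro hp
    have h2 := (polarCoord.map_source hp)
    rw [polarCoord_target, mem_prod] at h2
    rw [hTdef, mem_prod]
    simp only [polarCoord_apply] at h2 ⊢
    constructor
    · rintro ⟨h1, -⟩
      exact h1
    · intro h1
      exact ⟨h1, h2.2⟩
  set B : ℝ × ℝ → ℝ × ℝ →L[ℝ] ℝ × ℝ := fun p =>
    LinearMap.toContinuousLinearMap (Matrix.toLin (Module.Basis.finTwoProd ℝ) (Module.Basis.finTwoProd ℝ)
      !![Real.cos p.2, -p.1 * Real.sin p.2; Real.sin p.2, p.1 * Real.cos p.2]) with hB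
  have B_det : ∀ p, (B p).det = p.1 := by
    intro p
    conv_rhs => rw [← one_mul p.1, ← Real.cos_sq_add_sin_sq p.2]
    simp only [B, neg_mul, LinearMap.det_toContinuousLinearMap, LinearMap.det_toLin,
      Matrix.det_fin_two_of, sub_neg_eq_add]
    ring
  calc ∫⁻ x in {x : E2 | s < ‖x‖ ∧ ‖x‖ < δ}, g x
      = ∫⁻ p in mm ⁻¹' {x : E2 | s < ‖x‖ ∧ ‖x‖ < δ}, g (mm p) :=
        (mm_measurePreserving.setLIntegral_comp_preimage_emb mm_embedding g _).symm
    _ = ∫⁻ p in A', g (mm p) := by rw [hpre]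
    _ = ∫⁻ p in polarCoord.source ∩ A', g (mm p) := by
        refine (setLIntegral_congr ?_).symm
        exact inter_ae_eq_right_of_ae_eq_univ polarCoord_source_ae_eq_univ
    _ = ∫⁻ p in polarCoord.symm '' T, g (mm p) := by rw [himg]
    _ = ∫⁻ p in T, ENNReal.ofReal |(B p).det| * g (mm (polarCoord.symm p)) := by
        refine lintegral_image_eq_lintegral_abs_det_fderiv_mul volume
          ((measurableSet_Ioo).prod measurableSet_Ioo)
          (fun p _ => (hasFDerivAt_polarCoord_symm p).hasFDerivWithinAt) ?_ _
        exact (polarCoord.symm.injOn).mono hT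
    _ = ∫⁻ p in T, ENNReal.ofReal p.1 * g (mm (polarCoord.symm p)) := by
        refine setLIntegral_congr_fun ((measurableSet_Ioo).prod measurableSet_Ioo)
          (fun p hp => ?_)
        rw [B_det, abs_of_pos (lt_trans hs hp.1.1)]

end

lemma norm_gradient_eq (f : E2 → ℝ) (x : E2) : ‖gradient f x‖ = ‖fderiv ℝ f x‖ := by
  rw [gradient]
  exact LinearIsometryEquiv.norm_map _ _

section
variable {s δ a b : ℝ}

lemma lintegral_inv_Ioo (hs : 0 < s) (hsδ : s < δ) :
    ∫⁻ r in Ioo s δ, ENNReal.ofReal r⁻¹ = ENNReal.ofReal (Real.log δ - Real.log s) := by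
  have hδ : 0 < δ := hs.trans hsδ
  have hint : IntegrableOn (fun r : ℝ => r⁻¹) (Ioo s δ) := by
    apply (ContinuousOn.integrableOn_Icc ?_).mono_set Ioo_subset_Icc_self
    exact continuousOn_inv₀.mono fun x hx => ne_of_gt (lt_of_lt_of_le hs hx.1)
  rw [← ofReal_integral_eq_lintegral_ofReal hint ?_]
  · congr 1
    have h1 : ∫ r in Ioo s δ, r⁻¹ = ∫ r in s..δ, r⁻¹ := by
      rw [intervalIntegral.integral_of_le hsδ.le, integral_Ioc_eq_integral_Ioo]
    rw [h1, integral_inv_of_pos hs hδ, Real.log_div hδ.ne' hs.ne']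
  · filter_upwards [ae_restrict_mem measurableSet_Ioo] with r hr
    exact inv_nonneg.2 (hs.trans hr.1).le

lemma key_ray (hs : 0 < s) (hsδ : s < δ) (Ψ : E2 → ℝ)
    (hΨc : ContinuousOn Ψ {x : E2 | s ≤ ‖x‖ ∧ ‖x‖ ≤ δ})
    (hΨd : ContDiffOn ℝ 1 Ψ {x : E2 | s < ‖x‖ ∧ ‖x‖ < δ})
    (ha : ∀ x : E2, ‖x‖ = s → Ψ x = a) (hb : ∀ x : E2, ‖x‖ = δ → Ψ x = b) (θ : ℝ) :
    ENNReal.ofReal ((a - b) ^ 2 / (Real.log δ - Real.log s))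
      ≤ ∫⁻ r in Ioo s δ,
          ENNReal.ofReal r * ENNReal.ofReal (‖gradient Ψ (mm (polarCoord.symm (r, θ)))‖ ^ 2) := by
  have hδ : 0 < δ := hs.trans hsδ
  set A := {x : E2 | s < ‖x‖ ∧ ‖x‖ < δ} with hA
  set v : E2 := mm (Real.cos θ, Real.sin θ) with hv
  have hvnorm : ‖v‖ = 1 := by rw [hv, mm_norm]; simp [Real.cos_sq_add_sin_sq]
  set c : ℝ → E2 := fun r => r • v with hc
  have hcnorm : ∀ r, ‖c r‖ = |r| := by
    intro r; rw [hc]; simp [norm_smul, hvnorm, Real.norm_eq_abs]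
  have hpolar : ∀ r : ℝ, mm (polarCoord.symm (r, θ)) = c r := by
    intro r; rw [polarCoord_symm_apply]; exact mm_smul r _ _
  simp only [hpolar]
  set G : ℝ → ℝ := fun r => ‖gradient Ψ (c r)‖ with hG
  have hAopen : IsOpen A := annulus_open
  have hmem : ∀ r ∈ Ioo s δ, c r ∈ A := by
    intro r hr
    constructor <;> rw [hcnorm, abs_of_pos (hs.trans hr.1)]
    exacts [hr.1, hr.2]
  have hdiff : ∀ r ∈ Ioo s δ, DifferentiableAt ℝ Ψ (c r) := fun r hr =>
    (hΨd.differentiableOn one_ne_zero).differentiableAt (hAopen.mem_nhds (hmem r hr))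
  set u' : ℝ → ℝ := fun r => fderiv ℝ Ψ (c r) v with hu'
  have hcont_c : Continuous c := continuous_id.smul continuous_const
  have hderiv : ∀ r ∈ Ioo s δ, HasDerivAt (fun r => Ψ (c r)) (u' r) r := by
    intro r hr
    have h1 : HasDerivAt c v r := by simpa using (hasDerivAt_id r).smul_const v
    exact (hdiff r hr).hasFDerivAt.comp_hasDerivAt r h1
  have hbound : ∀ r ∈ Ioo s δ, |u' r| ≤ G r := by
    intro r hr
    calc |u' r| = ‖fderiv ℝ Ψ (c r) v‖ := (Real.norm_eq_abs _).symm
      _ ≤ ‖fderiv ℝ Ψ (c r)‖ * ‖v‖ := (fderiv ℝ Ψ (c r)).le_opNorm v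
      _ = G r := by rw [hvnorm, mul_one]; exact (norm_gradient_eq Ψ (c r)).symm
  have hGnonneg : ∀ r, 0 ≤ G r := fun r => norm_nonneg _
  have hfc : ContinuousOn (fderiv ℝ Ψ) A := hΨd.continuousOn_fderiv_of_isOpen hAopen le_rfl
  have hGcont : ContinuousOn G (Ioo s δ) := by
    have h1 : ContinuousOn (gradient Ψ) A :=
      (InnerProductSpace.toDual ℝ E2).symm.continuous.comp_continuousOn hfc
    exact ((h1.comp hcont_c.continuousOn hmem).norm : _)
  have hu'cont : ContinuousOn u' (Ioo s δ) := by
    have h1 : ContinuousOn (fun x => fderiv ℝ Ψ x v) A :=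
      (ContinuousLinearMap.apply ℝ ℝ v).continuous.comp_continuousOn hfc
    exact h1.comp hcont_c.continuousOn hmem
  have hus : Ψ (c s) = a := ha _ (by rw [hcnorm, abs_of_pos hs])
  have huδ : Ψ (c δ) = b := hb _ (by rw [hcnorm, abs_of_pos hδ])
  have hucont : ContinuousOn (fun r => Ψ (c r)) (Icc s δ) := by
    apply hΨc.comp hcont_c.continuousOn
    intro r hr
    constructor <;> rw [hcnorm, abs_of_pos (lt_of_lt_of_le hs hr.1)]
    exacts [hr.1, hr.2]
  have hu'meas : AEMeasurable u' (volume.restrict (Ioo s δ)) :=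
    hu'cont.aemeasurable measurableSet_Ioo
  -- Step 1: |a - b| is at most the integral of |u'|.
  have key1 : ENNReal.ofReal |a - b| ≤ ∫⁻ r in Ioo s δ, ENNReal.ofReal |u' r| := by
    by_cases hint : IntegrableOn u' (Ioo s δ) volume
    · have hii : IntervalIntegrable u' volume s δ := by
        rwa [intervalIntegrable_iff_integrableOn_Ioo_of_le hsδ.le]
      have hftc : ∫ r in s..δ, u' r = Ψ (c δ) - Ψ (c s) :=
        intervalIntegral.integral_eq_sub_of_hasDeriv_right_of_le hsδ.le hucont
          (fun r hr => (hderiv r hr).hasDerivWithinAt) hii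
      have h1 : |a - b| ≤ ∫ r in Ioo s δ, |u' r| := by
        have h2 : |a - b| = |∫ r in s..δ, u' r| := by rw [hftc, hus, huδ, abs_sub_comm]
        rw [h2]
        calc |∫ r in s..δ, u' r| ≤ ∫ r in s..δ, |u' r| :=
              intervalIntegral.abs_integral_le_integral_abs hsδ.le
          _ = ∫ r in Ioo s δ, |u' r| := by
              rw [intervalIntegral.integral_of_le hsδ.le, integral_Ioc_eq_integral_Ioo]
      calc ENNReal.ofReal |a - b| ≤ ENNReal.ofReal (∫ r in Ioo s δ, |u' r|) :=
            ENNReal.ofReal_le_ofReal h1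
        _ = ∫⁻ r in Ioo s δ, ENNReal.ofReal |u' r| :=
            ofReal_integral_eq_lintegral_ofReal hint.abs
              (Filter.Eventually.of_forall fun r => abs_nonneg _)
    · have h2 : ¬ HasFiniteIntegral u' (volume.restrict (Ioo s δ)) := fun h =>
        hint ⟨hu'meas.aestronglyMeasurable, h⟩
      rw [HasFiniteIntegral, not_lt, top_le_iff] at h2
      have h3 : ∫⁻ r in Ioo s δ, ENNReal.ofReal |u' r| = ⊤ := by
        rw [← h2]
        congr 1
        funext r
        rw [← Real.norm_eq_abs, ofReal_norm]
      rw [h3]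
      exact le_top
  set L := Real.log δ - Real.log s with hL
  have hLpos : 0 < L := sub_pos.2 (Real.log_lt_log hs hsδ)
  set I := ∫⁻ r in Ioo s δ, ENNReal.ofReal r * ENNReal.ofReal (G r ^ 2) with hI
  set f : ℝ → ℝ≥0∞ := fun r => ENNReal.ofReal (Real.sqrt r * G r) with hf
  set g : ℝ → ℝ≥0∞ := fun r => ENNReal.ofReal (Real.sqrt r)⁻¹ with hg
  have hfmeas : AEMeasurable f (volume.restrict (Ioo s δ)) := by
    apply ContinuousOn.aemeasurable ?_ measurableSet_Ioo
    exact ENNReal.continuous_ofReal.comp_continuousOn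
      ((Real.continuous_sqrt.continuousOn).mul hGcont)
  have hgmeas : Measurable g :=
    ENNReal.measurable_ofReal.comp (Real.continuous_sqrt.measurable.inv)
  have hconj : Real.HolderConjugate 2 2 := ⟨by norm_num, by norm_num, by norm_num⟩
  have hold :
      (∫⁻ r in Ioo s δ, (f * g) r)
        ≤ (∫⁻ r in Ioo s δ, f r ^ (2 : ℝ)) ^ (1 / 2 : ℝ)
          * (∫⁻ r in Ioo s δ, g r ^ (2 : ℝ)) ^ (1 / 2 : ℝ) :=
    ENNReal.lintegral_mul_le_Lp_mul_Lq _ hconj hfmeas hgmeas.aemeasurable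
  have hf2 : (∫⁻ r in Ioo s δ, f r ^ (2 : ℝ)) = I := by
    refine setLIntegral_congr_fun measurableSet_Ioo (fun r hr => ?_)
    have hr0 : 0 ≤ r := (hs.trans hr.1).le
    rw [hf]
    rw [ENNReal.ofReal_rpow_of_nonneg (mul_nonneg (Real.sqrt_nonneg r) (hGnonneg r))
      (by norm_num : (0:ℝ) ≤ 2)]
    rw [Real.rpow_two, mul_pow, Real.sq_sqrt hr0, ENNReal.ofReal_mul hr0]
  have hg2 : (∫⁻ r in Ioo s δ, g r ^ (2 : ℝ)) = ENNReal.ofReal L := by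
    rw [← lintegral_inv_Ioo hs hsδ]
    refine setLIntegral_congr_fun measurableSet_Ioo (fun r hr => ?_)
    have hr0 : 0 ≤ r := (hs.trans hr.1).le
    rw [hg]
    rw [ENNReal.ofReal_rpow_of_nonneg (inv_nonneg.2 (Real.sqrt_nonneg r))
      (by norm_num : (0:ℝ) ≤ 2)]
    rw [Real.rpow_two, inv_pow, Real.sq_sqrt hr0]
  have hptwise : ∫⁻ r in Ioo s δ, ENNReal.ofReal |u' r| ≤ ∫⁻ r in Ioo s δ, (f * g) r := by
    refine lintegral_mono_ae ?_
    filter_upwards [ae_restrict_mem measurableSet_Ioo] with r hr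
    have hrpos : 0 < r := hs.trans hr.1
    have hsq : Real.sqrt r ≠ 0 := ne_of_gt (Real.sqrt_pos.2 hrpos)
    have h1 : (f * g) r = ENNReal.ofReal (G r) := by
      rw [Pi.mul_apply, hf, hg, ← ENNReal.ofReal_mul (mul_nonneg (Real.sqrt_nonneg r) (hGnonneg r))]
      congr 1
      field_simp
    rw [h1]
    exact ENNReal.ofReal_le_ofReal (hbound r hr)
  have hstep : ENNReal.ofReal |a - b| ≤ I ^ (1 / 2 : ℝ) * (ENNReal.ofReal L) ^ (1 / 2 : ℝ) := by
    calc ENNReal.ofReal |a - b| ≤ ∫⁻ r in Ioo s δ, ENNReal.ofReal |u' r| := key1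
      _ ≤ ∫⁻ r in Ioo s δ, (f * g) r := hptwise
      _ ≤ _ := by rw [← hf2, ← hg2]; exact hold
  have key3 : ENNReal.ofReal ((a - b) ^ 2) ≤ I * ENNReal.ofReal L := by
    have h := ENNReal.rpow_le_rpow hstep (by norm_num : (0:ℝ) ≤ 2)
    rw [ENNReal.mul_rpow_of_nonneg _ _ (by norm_num : (0:ℝ) ≤ 2), ← ENNReal.rpow_mul,
      ← ENNReal.rpow_mul] at h
    norm_num at h
    rwa [← ENNReal.ofReal_pow (abs_nonneg _), sq_abs] at h
  have hLne : ENNReal.ofReal L ≠ 0 := by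
    simp only [ne_eq, ENNReal.ofReal_eq_zero, not_le]
    exact hLpos
  calc ENNReal.ofReal ((a - b) ^ 2 / L)
      = ENNReal.ofReal ((a - b) ^ 2) / ENNReal.ofReal L := ENNReal.ofReal_div_of_pos hLpos
    _ ≤ I := by
        rw [ENNReal.div_le_iff_le_mul (Or.inl hLne) (Or.inl ENNReal.ofReal_ne_top)]
        exact key3

end

lemma polar_symm_cont : Continuous (fun p : ℝ × ℝ => mm (polarCoord.symm p)) := by
  have h : (fun p : ℝ × ℝ => mm (polarCoord.symm p))
      = fun p : ℝ × ℝ => mm (p.1 * Real.cos p.2, p.1 * Real.sin p.2) :=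
    funext fun p => by rw [polarCoord_symm_apply]
  rw [h]
  exact mm_continuous.comp
    ((continuous_fst.mul (Real.continuous_cos.comp continuous_snd)).prodMk
      (continuous_fst.mul (Real.continuous_sin.comp continuous_snd)))

theorem annulus_dirichlet_lower_bound' (s δ a b : ℝ) (hs : 0 < s) (hsδ : s < δ)
    (Ψ : E2 → ℝ)
    (hΨc : ContinuousOn Ψ {x : E2 | s ≤ ‖x‖ ∧ ‖x‖ ≤ δ})
    (hΨd : ContDiffOn ℝ 1 Ψ {x : E2 | s < ‖x‖ ∧ ‖x‖ < δ})
    (ha : ∀ x : E2, ‖x‖ = s → Ψ x = a)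
    (hb : ∀ x : E2, ‖x‖ = δ → Ψ x = b) :
    (∫⁻ x in {x : E2 | s < ‖x‖ ∧ ‖x‖ < δ}, ENNReal.ofReal (‖gradient Ψ x‖ ^ 2)) ≥
      ENNReal.ofReal (4 * π * (a - b) ^ 2 / (Real.log (δ ^ 2) - Real.log (s ^ 2))) := by
  have hδ : 0 < δ := hs.trans hsδ
  set L := Real.log δ - Real.log s with hLdef
  have hLpos : 0 < L := sub_pos.2 (Real.log_lt_log hs hsδ)
  rw [ge_iff_le, lintegral_annulus hs (fun x => ENNReal.ofReal (‖gradient Ψ x‖ ^ 2))]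
  set k : ℝ × ℝ → ℝ≥0∞ := fun p =>
    ENNReal.ofReal p.1 * ENNReal.ofReal (‖gradient Ψ (mm (polarCoord.symm p))‖ ^ 2) with hk
  set T : Set (ℝ × ℝ) := Ioo s δ ×ˢ Ioo (-π) π with hT
  have hTmeas : MeasurableSet T := measurableSet_Ioo.prod measurableSet_Ioo
  have hmaps : ∀ p ∈ T, mm (polarCoord.symm p) ∈ {x : E2 | s < ‖x‖ ∧ ‖x‖ < δ} := by
    rintro ⟨r, θ⟩ hp
    have h0 : (0:ℝ) ≤ r := (hs.trans hp.1.1).le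
    constructor <;> rw [norm_mm_polar r θ h0]
    exacts [hp.1.1, hp.1.2]
  have hrestr : (volume : Measure (ℝ × ℝ)).restrict T
      = (volume.restrict (Ioo s δ)).prod (volume.restrict (Ioo (-π) π)) := by
    rw [Measure.volume_eq_prod, Measure.prod_restrict]
  have hkmeas : AEMeasurable k ((volume.restrict (Ioo s δ)).prod (volume.restrict (Ioo (-π) π))) := by
    rw [← hrestr]
    have hgrad : ContinuousOn (gradient Ψ) {x : E2 | s < ‖x‖ ∧ ‖x‖ < δ} :=
      (InnerProductSpace.toDual ℝ E2).symm.continuous.comp_continuousOn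
        (hΨd.continuousOn_fderiv_of_isOpen annulus_open le_rfl)
    have h2 : ContinuousOn (fun p : ℝ × ℝ =>
        ENNReal.ofReal (‖gradient Ψ (mm (polarCoord.symm p))‖ ^ 2)) T :=
      ENNReal.continuous_ofReal.comp_continuousOn
        (((hgrad.comp polar_symm_cont.continuousOn hmaps).norm).pow 2)
    exact ((ENNReal.measurable_ofReal.comp measurable_fst).aemeasurable).mul
      (h2.aemeasurable hTmeas)
  have htonelli : ∫⁻ p in T, k p = ∫⁻ θ in Ioo (-π) π, ∫⁻ r in Ioo s δ, k (r, θ) := by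
    rw [hrestr, lintegral_prod_symm k hkmeas]
  rw [htonelli]
  calc ENNReal.ofReal (4 * π * (a - b) ^ 2 / (Real.log (δ ^ 2) - Real.log (s ^ 2)))
      = ENNReal.ofReal ((a - b) ^ 2 / L) * ENNReal.ofReal (2 * π) := by
        rw [← ENNReal.ofReal_mul (by positivity)]
        congr 1
        have h1 : Real.log (δ ^ 2) - Real.log (s ^ 2) = 2 * L := by
          rw [Real.log_pow, Real.log_pow, hLdef]; push_cast; ring
        rw [h1, div_mul_eq_mul_div, div_eq_div_iff (by positivity : (2:ℝ) * L ≠ 0) hLpos.ne']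
        ring
    _ = ENNReal.ofReal ((a - b) ^ 2 / L) * volume (Ioo (-π) π) := by
        rw [Real.volume_Ioo]
        congr 1
        ring
    _ = ∫⁻ _ in Ioo (-π) π, ENNReal.ofReal ((a - b) ^ 2 / L) := (setLIntegral_const _ _).symm
    _ ≤ ∫⁻ θ in Ioo (-π) π, ∫⁻ r in Ioo s δ, k (r, θ) := by
        refine lintegral_mono_ae ?_
        filter_upwards [ae_restrict_mem measurableSet_Ioo] with θ _
        exact key_ray hs hsδ Ψ hΨc hΨd ha hb θ

/-- Dirichlet-principle lower bound on an annulus. If `Ψ` is continuous on the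
closed annulus `{s ≤ ‖x‖ ≤ δ}`, `C¹` on the open annulus, with constant boundary values
`a` on `‖x‖ = s` and `b` on `‖x‖ = δ`, then its Dirichlet energy (possibly `+∞`) is at
least `4π (a-b)²/(log δ² - log s²)`. -/
theorem annulus_dirichlet_lower_bound (s δ a b : ℝ) (hs : 0 < s) (hsδ : s < δ)
    (Ψ : E2 → ℝ)
    (hΨc : ContinuousOn Ψ {x : E2 | s ≤ ‖x‖ ∧ ‖x‖ ≤ δ})
    (hΨd : ContDiffOn ℝ 1 Ψ {x : E2 | s < ‖x‖ ∧ ‖x‖ < δ})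
    (ha : ∀ x : E2, ‖x‖ = s → Ψ x = a)
    (hb : ∀ x : E2, ‖x‖ = δ → Ψ x = b) :
    (∫⁻ x in {x : E2 | s < ‖x‖ ∧ ‖x‖ < δ}, ENNReal.ofReal (‖gradient Ψ x‖ ^ 2)) ≥
      ENNReal.ofReal (4 * π * (a - b) ^ 2 / (Real.log (δ ^ 2) - Real.log (s ^ 2))) := by
  exact annulus_dirichlet_lower_bound' s δ a b hs hsδ Ψ hΨc hΨd ha hb
end

section
/- Let (m_n), (λ_n), (c_n), (d_n), (ε_n) be real sequences such that m_n → +∞ and λ_n → +∞, the sequences (c_n) and (d_n) are bounded, m_n + c_n > 0 for all n, ε_n ∈ [0, 8π) for all n with ε_n → 0, and suppose there is a constant C ∈ ℝ such that for all n: 2π·(m_n + λ_n + d_n)²/(m_n + c_n) - (8π - ε_n)·λ_n ≤ C. Then λ_n/m_n → 1 as n → ∞. -/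
open Filter Asymptotics
open scoped Real Topology

/-!
Put `a_n = m_n + c_n`. Since `ε_n ≥ 0` and `(a + λ + e)² - 4aλ = (a - λ)² + 2e(a + λ) + e²`, the energy
bound becomes `(λ_n - a_n)² ≤ K (λ_n + a_n)` for a constant `K`. Through square roots this says that
`√λ_n - √a_n` stays bounded, so `√λ_n ~ √a_n`, hence `λ_n ~ a_n`, and `a_n ~ m_n` because `c_n` is bounded.
-/

theorem Real.abs_sqrt_sub_sqrt_le_sqrt_of_sq_sub_le {x y K : ℝ} (hx : 0 ≤ x) (hy : 0 ≤ y)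
    (hK : 0 ≤ K) (h : (x - y) ^ 2 ≤ K * (x + y)) : |√x - √y| ≤ √K := by
  apply Real.abs_le_sqrt
  have hsum_le : x + y ≤ (√x + √y) ^ 2 := by
    nlinarith [Real.sq_sqrt hx, Real.sq_sqrt hy, Real.sqrt_nonneg x, Real.sqrt_nonneg y]
  have hfactor : (x - y) ^ 2 = (√x - √y) ^ 2 * (√x + √y) ^ 2 := by
    rw [← mul_pow]; congr 1; ring_nf; rw [Real.sq_sqrt hx, Real.sq_sqrt hy]
  rcases (add_nonneg (Real.sqrt_nonneg x) (Real.sqrt_nonneg y)).eq_or_lt with hzero | hpos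
  · have hx0 : √x = 0 := by linarith [Real.sqrt_nonneg x, Real.sqrt_nonneg y]
    have hy0 : √y = 0 := by linarith [Real.sqrt_nonneg x, Real.sqrt_nonneg y]
    simpa [hx0, hy0] using hK
  · refine le_of_mul_le_mul_right ?_ (pow_pos hpos 2)
    calc (√x - √y) ^ 2 * (√x + √y) ^ 2 = (x - y) ^ 2 := hfactor.symm
      _ ≤ K * (x + y) := h
      _ ≤ K * (√x + √y) ^ 2 := mul_le_mul_of_nonneg_left hsum_le hK

namespace Asymptotics

variable {α : Type*} {l : Filter α}

theorem isEquivalent_add_of_isBigO_one {β : Type*} [NormedAddCommGroup β] {u w : α → β}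
    (hu : Tendsto (fun x => ‖u x‖) l atTop) (hw : w =O[l] (fun _ => (1 : ℝ))) : u + w ~[l] u :=
  IsEquivalent.refl.add_isLittleO (hw.trans_isLittleO ((isLittleO_one_left_iff ℝ).mpr hu))

theorem isEquivalent_of_sq_sub_le_mul_add {u v : α → ℝ} {K : ℝ} (hK : 0 ≤ K)
    (hv : Tendsto v l atTop) (hu : ∀ᶠ x in l, 0 ≤ u x)
    (h : ∀ᶠ x in l, (u x - v x) ^ 2 ≤ K * (u x + v x)) : u ~[l] v := by
  have hsqrt_v : Tendsto (fun x => √(v x)) l atTop := Real.tendsto_sqrt_atTop.comp hv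
  have hsqrt_sub : (fun x => √(u x) - √(v x)) =O[l] (fun _ => (1 : ℝ)) := by
    refine IsBigO.of_bound √K ?_
    filter_upwards [h, hu, hv.eventually_ge_atTop 0] with x hx hux hvx
    simpa using Real.abs_sqrt_sub_sqrt_le_sqrt_of_sq_sub_le hux hvx hK hx
  have hsqrt : (fun x => √(u x)) ~[l] (fun x => √(v x)) :=
    IsLittleO.isEquivalent
      (hsqrt_sub.trans_isLittleO ((isLittleO_one_left_iff ℝ).mpr
        (tendsto_norm_atTop_atTop.comp hsqrt_v)))
  refine ((hsqrt.pow 2).congr_left ?_).congr_right ?_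
  · filter_upwards [hu] with x hx using Real.sq_sqrt hx
  · filter_upwards [hv.eventually_ge_atTop 0] with x hx using Real.sq_sqrt hx

end Asymptotics

theorem sq_sub_le_mul_add_of_energy_le {a l e ε B C : ℝ} (ha : 0 < a) (hl : 0 ≤ l) (hε : 0 ≤ ε)
    (he : |e| ≤ B) (h : 2 * π * (a + l + e) ^ 2 / a - (8 * π - ε) * l ≤ C) :
    (l - a) ^ 2 ≤ (|C| + 4 * π * B) / (2 * π) * (l + a) := by
  rw [div_mul_eq_mul_div, le_div_iff₀ (by positivity)]
  have hmul : 2 * π * (a + l + e) ^ 2 ≤ (C + (8 * π - ε) * l) * a := by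
    rw [sub_le_iff_le_add, div_le_iff₀ ha] at h
    linarith
  have hCa : C * a ≤ |C| * (l + a) :=
    (mul_le_mul_of_nonneg_right (le_abs_self C) ha.le).trans (by nlinarith [abs_nonneg C])
  have hel : -e * (l + a) ≤ B * (l + a) :=
    mul_le_mul_of_nonneg_right ((neg_le_abs e).trans he) (by linarith)
  nlinarith [mul_nonneg (mul_nonneg hε hl) ha.le, Real.pi_pos, sq_nonneg e]

theorem neck_forces_lambda_eq_m_general (m lam c d ε : ℕ → ℝ)
    (hm : Tendsto m atTop atTop) (hlam : Tendsto lam atTop atTop)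
    (hc : ∃ B : ℝ, ∀ n, |c n| ≤ B) (hd : ∃ B : ℝ, ∀ n, |d n| ≤ B)
    (hε : ∀ n, ε n ∈ Set.Ico (0 : ℝ) (8 * π))
    (C : ℝ)
    (hC : ∀ n, 2 * π * (m n + lam n + d n) ^ 2 / (m n + c n) - (8 * π - ε n) * lam n ≤ C) :
    Tendsto (fun n => lam n / m n) atTop (𝓝 1) := by
  obtain ⟨Bc, hBc⟩ := hc
  obtain ⟨Bd, hBd⟩ := hd
  have hdc : ∀ n, |d n - c n| ≤ Bd + Bc := fun n => (abs_sub _ _).trans (add_le_add (hBd n) (hBc n))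
  have hB : 0 ≤ Bd + Bc := (abs_nonneg _).trans (hdc 0)
  have hmc : (m + c) ~[atTop] m :=
    isEquivalent_add_of_isBigO_one (tendsto_norm_atTop_atTop.comp hm)
      (IsBigO.of_bound Bc (.of_forall fun n => by simpa using hBc n))
  have hmc_top : Tendsto (m + c) atTop atTop := hmc.symm.tendsto_atTop hm
  have hkey : ∀ᶠ n in atTop,
      (lam n - (m + c) n) ^ 2 ≤ (|C| + 4 * π * (Bd + Bc)) / (2 * π) * (lam n + (m + c) n) := by
    filter_upwards [hmc_top.eventually_gt_atTop 0, hlam.eventually_ge_atTop 0] with n ha hl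
    have hCn := hC n
    rw [show m n + lam n + d n = m n + c n + lam n + (d n - c n) by ring] at hCn
    exact sq_sub_le_mul_add_of_energy_le ha hl (hε n).1 (hdc n) hCn
  have hlam_equiv : lam ~[atTop] (m + c) :=
    isEquivalent_of_sq_sub_le_mul_add (by positivity) hmc_top (hlam.eventually_ge_atTop 0) hkey
  exact (isEquivalent_iff_tendsto_one (hm.eventually_ne_atTop 0)).mp (hlam_equiv.trans hmc)

/-- if `m_n → +∞`, `λ_n → +∞`, `(c_n)` and `(d_n)` are bounded,
`m_n + c_n > 0`, `ε_n ∈ [0, 8π)` with `ε_n → 0`, and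
`2π (m_n + λ_n + d_n)²/(m_n + c_n) - (8π - ε_n) λ_n ≤ C` for all `n`,
then `λ_n / m_n → 1`. -/
theorem neck_forces_lambda_eq_m (m lam c d ε : ℕ → ℝ)
    (hm : Tendsto m atTop atTop) (hlam : Tendsto lam atTop atTop)
    (hc : ∃ B : ℝ, ∀ n, |c n| ≤ B) (hd : ∃ B : ℝ, ∀ n, |d n| ≤ B)
    (hmc : ∀ n, 0 < m n + c n)
    (hε : ∀ n, ε n ∈ Set.Ico (0 : ℝ) (8 * π))
    (hε0 : Tendsto ε atTop (𝓝 0))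
    (C : ℝ)
    (hC : ∀ n, 2 * π * (m n + lam n + d n) ^ 2 / (m n + c n) - (8 * π - ε n) * lam n ≤ C) :
    Tendsto (fun n => lam n / m n) atTop (𝓝 1) :=
  neck_forces_lambda_eq_m_general m lam c d ε hm hlam hc hd hε C hC
end
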